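/- arXiv:2103.03725 — 4 statements merged into one kernel-verified Lean document; each statement's English description precedes it below -/
import Mathlib

section
/- The negative gradient of the PCN free energy F = Σ_{l=0}^{l_max−1} Σ_i (1/2)(ε^l_i)² with respect to a hidden value node x^l_i (for 0 < l < l_max) equals −ε^l_i + f'(x^l_i)·Σ_{k=1}^{n^{l-1}} ε^{l-1}_k θ^l_{k,i}, where ε^l_i = x^l_i − Σ_j θ^{l+1}_{i,j} f(x^{l+1}_j). -/
/-- PCN prediction `μ^l_i = ∑_j θ^{l+1}_{i,j} f(x^{l+1}_j)`. -/
noncomputable def mu (n : ℕ → ℕ) (θ : ℕ → ℕ → ℕ → ℝ) (f : ℝ → ℝ)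
    (x : ℕ → ℕ → ℝ) (l i : ℕ) : ℝ :=
  ∑ j ∈ Finset.range (n (l + 1)), θ (l + 1) i j * f (x (l + 1) j)

/-- PCN free energy `F = ∑_{l=0}^{l_max−1} ∑_i (1/2)(ε^l_i)^2` with `ε^l_i = x^l_i − μ^l_i`. -/
noncomputable def freeEnergy (L : ℕ) (n : ℕ → ℕ) (θ : ℕ → ℕ → ℕ → ℝ) (f : ℝ → ℝ)
    (x : ℕ → ℕ → ℝ) : ℝ :=
  ∑ l ∈ Finset.range L, ∑ i ∈ Finset.range (n l),
    (1 / 2) * (x l i - mu n θ f x l i) ^ 2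

/-- Update the value node at position `(l, i)` to the value `z`. -/
def updX (x : ℕ → ℕ → ℝ) (l i : ℕ) (z : ℝ) : ℕ → ℕ → ℝ :=
  fun l' i' => if l' = l ∧ i' = i then z else x l' i'

/-!
Moving `x^l_i` to `z` changes `ε^l_i` with slope `1` and, through `μ^{l-1}`, each `ε^{l-1}_k`
with slope `-θ^l_{k,i} f'(z)`; no other prediction error depends on `x^l_i`. The chain rule applied
to `½ ε²` then leaves exactly these two contributions.
-/

open Finset

noncomputable def predictionError (n : ℕ → ℕ) (θ : ℕ → ℕ → ℕ → ℝ) (f : ℝ → ℝ)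
    (x : ℕ → ℕ → ℝ) (l i : ℕ) : ℝ :=
  x l i - mu n θ f x l i

lemma updX_self (x : ℕ → ℕ → ℝ) (l i : ℕ) : updX x l i (x l i) = x := by
  ext l' i'
  unfold updX
  split_ifs with h
  · rw [h.1, h.2]
  · rfl

lemma hasDerivAt_comp_updX {g : ℝ → ℝ} {z : ℝ} (hg : DifferentiableAt ℝ g z)
    (x : ℕ → ℕ → ℝ) (l i l' i' : ℕ) :
    HasDerivAt (fun z => g (updX x l i z l' i')) (if l' = l ∧ i' = i then deriv g z else 0) z := by
  by_cases h : l' = l ∧ i' = i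
  · simpa [updX, h] using hg.hasDerivAt
  · simpa [updX, h] using hasDerivAt_const z (g (x l' i'))

section

variable {n : ℕ → ℕ} {θ : ℕ → ℕ → ℕ → ℝ} {f : ℝ → ℝ} {x : ℕ → ℕ → ℝ} {l i : ℕ} {z : ℝ}

lemma hasDerivAt_mu_updX (hf : DifferentiableAt ℝ f z) (hi : i < n l) (l' i' : ℕ) :
    HasDerivAt (fun z => mu n θ f (updX x l i z) l' i')
      (if l' + 1 = l then θ l i' i * deriv f z else 0) z := by
  have h := HasDerivAt.fun_sum (u := range (n (l' + 1))) fun j _ =>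
    (hasDerivAt_comp_updX hf x l i (l' + 1) j).const_mul (θ (l' + 1) i' j)
  refine h.congr_deriv ?_
  split_ifs with hl
  · subst hl
    simp [hi]
  · simp [hl]

lemma hasDerivAt_predictionError_updX (hf : DifferentiableAt ℝ f z) (hi : i < n l)
    (l' i' : ℕ) :
    HasDerivAt (fun z => predictionError n θ f (updX x l i z) l' i')
      ((if l' = l ∧ i' = i then 1 else 0) - if l' + 1 = l then θ l i' i * deriv f z else 0) z := by
  have hx := hasDerivAt_comp_updX (differentiableAt_id (x := z)) x l i l' i'
  rw [deriv_id] at hx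
  exact hx.sub (hasDerivAt_mu_updX hf hi l' i')

lemma hasDerivAt_freeEnergy_updX (L : ℕ) (hf : DifferentiableAt ℝ f z) (hi : i < n l) :
    HasDerivAt (fun z => freeEnergy L n θ f (updX x l i z))
      (∑ l' ∈ range L, ∑ i' ∈ range (n l'), predictionError n θ f (updX x l i z) l' i' *
        ((if l' = l ∧ i' = i then 1 else 0) - if l' + 1 = l then θ l i' i * deriv f z else 0))
      z := by
  refine HasDerivAt.fun_sum fun l' _ => HasDerivAt.fun_sum fun i' _ => ?_
  have h := ((hasDerivAt_predictionError_updX (θ := θ) (x := x) hf hi l' i').pow 2).const_mul (1 / 2 : ℝ)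
  exact h.congr_deriv (by ring)

end

lemma sum_sum_mul_indicator_sub {L l i : ℕ} {n : ℕ → ℕ} (e : ℕ → ℕ → ℝ) (c : ℕ → ℝ)
    (hl0 : 0 < l) (hlL : l < L) (hi : i < n l) :
    ∑ l' ∈ range L, ∑ i' ∈ range (n l'),
        e l' i' * ((if l' = l ∧ i' = i then 1 else 0) - if l' + 1 = l then c i' else 0)
      = e l i - ∑ k ∈ range (n (l - 1)), e (l - 1) k * c k := by
  simp only [mul_sub, sum_sub_distrib, mul_ite, mul_one, mul_zero, ite_and, sum_ite_irrel,
    sum_const_zero, sum_ite_eq', mem_range, if_pos hlL, if_pos hi]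
  rw [sum_eq_single_of_mem (l - 1) (mem_range.2 (by omega)) fun l' _ hl' => if_neg (by omega),
    if_pos (by omega)]

/-- the negative gradient of `F` with respect to a hidden value node
`x^l_i` (for `0 < l < l_max`) equals `−ε^l_i + f'(x^l_i)·∑_k ε^{l-1}_k θ^l_{k,i}`. -/
theorem pcn_inference_gradient
    (L : ℕ) (n : ℕ → ℕ) (θ : ℕ → ℕ → ℕ → ℝ) (f : ℝ → ℝ) (hf : Differentiable ℝ f)
    (x : ℕ → ℕ → ℝ) (l i : ℕ) (hl0 : 0 < l) (hlL : l < L) (hi : i < n l) :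
    - deriv (fun z => freeEnergy L n θ f (updX x l i z)) (x l i)
      = -(x l i - mu n θ f x l i)
        + deriv f (x l i) *
          ∑ k ∈ Finset.range (n (l - 1)), (x (l - 1) k - mu n θ f x (l - 1) k) * θ l k i := by
  rw [(hasDerivAt_freeEnergy_updX L (hf (x l i)) hi).deriv, updX_self,
    sum_sum_mul_indicator_sub _ _ hl0 hlL hi, predictionError, mul_sum, neg_sub, sub_eq_neg_add]
  congr 1
  exact sum_congr rfl fun k _ => by rw [predictionError]; ring
end

section
/- (Zero-propagation lemma) In a PCN trained with Z-IL with initial condition ε^l_{i,0} = 0 for all l > 0 and fixed boundary layers x^{l_max}_t = s^in, x^0_t = s^out, the value nodes of layer l remain at their initial state for all inference times t < l; formally x^l_{i,t} = x^l_{i,0}, ε^l_{i,t} = 0, and μ^{l-1}_{i,t} = μ^{l-1}_{i,0} for all 1 ≤ l ≤ l_max − 1 and t < l. -/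
lemma mu_congr_succ_layer {n : ℕ → ℕ} {θ : ℕ → ℕ → ℕ → ℝ} {f : ℝ → ℝ} {x y : ℕ → ℕ → ℝ}
    {l : ℕ} (h : x (l + 1) = y (l + 1)) : mu n θ f x l = mu n θ f y l := by
  funext i
  simp only [mu, h]

section ZeroPropagation

variable {L : ℕ} {n : ℕ → ℕ} {θ : ℕ → ℕ → ℕ → ℝ} {f : ℝ → ℝ} {sIn : ℕ → ℝ} {γ : ℝ}
  {X : ℕ → ℕ → ℕ → ℝ} {t l : ℕ}

lemma succ_layer_eq_init_of_lt (hclampIn : ∀ t i, X t L i = sIn i)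
    (hfrozen : ∀ l, t < l → l ≤ L - 1 → X t l = X 0 l) (htl : t < l) (hlL : l ≤ L - 1) :
    X t (l + 1) = X 0 (l + 1) := by
  obtain hhidden | hinput : l + 1 ≤ L - 1 ∨ l + 1 = L := by omega
  · exact hfrozen (l + 1) (by omega) hhidden
  · funext i
    rw [hinput, hclampIn, hclampIn]

lemma error_eq_zero_of_lt (hclampIn : ∀ t i, X t L i = sIn i)
    (hinit : ∀ l, 1 ≤ l → l ≤ L - 1 → ∀ i, X 0 l i = mu n θ f (X 0) l i)
    (hfrozen : ∀ l, t < l → l ≤ L - 1 → X t l = X 0 l) (htl : t < l) (hlL : l ≤ L - 1) (i : ℕ) :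
    X t l i - mu n θ f (X t) l i = 0 := by
  rw [hfrozen l htl hlL, mu_congr_succ_layer (succ_layer_eq_init_of_lt hclampIn hfrozen htl hlL),
    sub_eq_zero]
  exact hinit l (by omega) hlL i

lemma layer_eq_init_of_lt (hclampIn : ∀ t i, X t L i = sIn i)
    (hdyn : ∀ t, ∀ l, 0 < l → l < L → ∀ i,
      X (t + 1) l i = X t l i + γ *
        (-(X t l i - mu n θ f (X t) l i) +
          deriv f (X t l i) *
            ∑ k ∈ Finset.range (n (l - 1)),
              (X t (l - 1) k - mu n θ f (X t) (l - 1) k) * θ l k i))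
    (hinit : ∀ l, 1 ≤ l → l ≤ L - 1 → ∀ i, X 0 l i = mu n θ f (X 0) l i) :
    ∀ t l, t < l → l ≤ L - 1 → X t l = X 0 l := by
  intro t
  induction t with
  | zero => intro l _ _; rfl
  | succ t ih =>
    intro l htl hlL
    have herr := error_eq_zero_of_lt hclampIn hinit ih (l := l) (by omega) hlL
    have herr_below := error_eq_zero_of_lt hclampIn hinit ih (l := l - 1) (by omega) (by omega)
    funext i
    rw [hdyn t l (by omega) (by omega) i, herr i,
      Finset.sum_eq_zero fun k _ => by rw [herr_below k, zero_mul], ih l (by omega) hlL]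
    ring

end ZeroPropagation

theorem zero_propagation_general
    (L : ℕ) (n : ℕ → ℕ) (θ : ℕ → ℕ → ℕ → ℝ) (f : ℝ → ℝ)
    (sIn : ℕ → ℝ) (γ : ℝ) (X : ℕ → ℕ → ℕ → ℝ)
    (hclampIn : ∀ t i, X t L i = sIn i)
    (hdyn : ∀ t, ∀ l, 0 < l → l < L → ∀ i,
      X (t + 1) l i = X t l i + γ *
        (-(X t l i - mu n θ f (X t) l i) +
          deriv f (X t l i) *
            ∑ k ∈ Finset.range (n (l - 1)),
              (X t (l - 1) k - mu n θ f (X t) (l - 1) k) * θ l k i))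
    (hinit : ∀ l, 1 ≤ l → l ≤ L - 1 → ∀ i, X 0 l i = mu n θ f (X 0) l i) :
    ∀ l, 1 ≤ l → l ≤ L - 1 → ∀ t < l, ∀ i,
      X t l i = X 0 l i ∧
      X t l i - mu n θ f (X t) l i = 0 ∧
      mu n θ f (X t) (l - 1) i = mu n θ f (X 0) (l - 1) i := by
  intro l hl1 hlL t htl i
  have hfrozen := layer_eq_init_of_lt hclampIn hdyn hinit t
  have hlayer : X t (l - 1 + 1) = X 0 (l - 1 + 1) := by
    rw [Nat.sub_add_cancel hl1]
    exact hfrozen l htl hlL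
  exact ⟨congrFun (hfrozen l htl hlL) i, error_eq_zero_of_lt hclampIn hinit hfrozen htl hlL i,
    congrFun (mu_congr_succ_layer hlayer) i⟩

/-- zero-propagation lemma: in Z-IL with `ε^l_{i,0} = 0` for `l > 0`
and clamped boundary layers, for every hidden layer `1 ≤ l ≤ l_max − 1` and every
inference time `t < l`: `x^l_{i,t} = x^l_{i,0}`, `ε^l_{i,t} = 0`, and
`μ^{l-1}_{i,t} = μ^{l-1}_{i,0}`.
Here `X t l i` is the value node of layer `l`, neuron `i`, at inference time `t`. -/
theorem zero_propagation
    (L : ℕ) (n : ℕ → ℕ) (θ : ℕ → ℕ → ℕ → ℝ) (f : ℝ → ℝ) (hf : Differentiable ℝ f)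
    (sIn sOut : ℕ → ℝ) (γ : ℝ) (X : ℕ → ℕ → ℕ → ℝ)
    (hclampIn : ∀ t i, X t L i = sIn i)
    (hclampOut : ∀ t i, X t 0 i = sOut i)
    (hdyn : ∀ t, ∀ l, 0 < l → l < L → ∀ i,
      X (t + 1) l i = X t l i + γ *
        (-(X t l i - mu n θ f (X t) l i) +
          deriv f (X t l i) *
            ∑ k ∈ Finset.range (n (l - 1)),
              (X t (l - 1) k - mu n θ f (X t) (l - 1) k) * θ l k i))
    (hinit : ∀ l, 1 ≤ l → l ≤ L - 1 → ∀ i, X 0 l i = mu n θ f (X 0) l i) :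
    ∀ l, 1 ≤ l → l ≤ L - 1 → ∀ t < l, ∀ i,
      X t l i = X 0 l i ∧
      X t l i - mu n θ f (X t) l i = 0 ∧
      mu n θ f (X t) (l - 1) i = mu n θ f (X 0) (l - 1) i :=
  zero_propagation_general L n θ f sIn γ X hclampIn hdyn hinit
end

section
/- In a PCN running Z-IL inference with γ = 1 and ε^l_{i,0} = 0 for l > 0, the prediction error at layer l and inference time t = l satisfies ε^l_{i,l} = f'(μ^l_{i,0}) · Σ_{k=1}^{n^{l-1}} ε^{l-1}_{k,l-1} θ^l_{k,i} for 1 ≤ l ≤ l_max − 1. -/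
open Finset

variable {L : ℕ} {n : ℕ → ℕ} {θ : ℕ → ℕ → ℕ → ℝ} {f : ℝ → ℝ} {γ : ℝ} {X : ℕ → ℕ → ℕ → ℝ}

noncomputable def predError (n : ℕ → ℕ) (θ : ℕ → ℕ → ℕ → ℝ) (f : ℝ → ℝ)
    (x : ℕ → ℕ → ℝ) (l i : ℕ) : ℝ :=
  x l i - mu n θ f x l i

theorem mu_congr {x y : ℕ → ℕ → ℝ} {l : ℕ} (h : x (l + 1) = y (l + 1)) :
    mu n θ f x l = mu n θ f y l := by
  funext i
  simp only [mu, h]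

theorem predError_congr {x y : ℕ → ℕ → ℝ} {l : ℕ} (h₀ : x l = y l)
    (h₁ : x (l + 1) = y (l + 1)) : predError n θ f x l = predError n θ f y l := by
  funext i
  simp only [predError, h₀, mu_congr h₁]

section Dynamics

variable
    (hclamp : ∀ t, X t L = X 0 L)
    (hdyn : ∀ t, ∀ l, 0 < l → l < L → ∀ i,
      X (t + 1) l i = X t l i + γ *
        (-predError n θ f (X t) l i +
          deriv f (X t l i) *
            ∑ k ∈ range (n (l - 1)), predError n θ f (X t) (l - 1) k * θ l k i))
    (hinit : ∀ l, 0 < l → l < L → predError n θ f (X 0) l = 0)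
include hclamp hdyn hinit

theorem state_eq_init_of_lt (t : ℕ) : ∀ l, t < l → l ≤ L → X t l = X 0 l := by
  induction t with
  | zero => intro l _ _; rfl
  | succ t ih =>
    have herr : ∀ l, t < l → l < L → predError n θ f (X t) l = 0 := fun l hl hL => by
      rw [predError_congr (ih l hl hL.le) (ih (l + 1) (by omega) hL), hinit l (by omega) hL]
    intro l hl hL
    rcases hL.eq_or_lt with rfl | hL
    · exact hclamp _
    funext i
    have hprev : ∀ k, predError n θ f (X t) (l - 1) k = 0 := fun k =>
      congrFun (herr (l - 1) (by omega) (by omega)) k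
    rw [hdyn t l (by omega) hL, congrFun (herr l (by omega) hL), ih l (by omega) hL.le]
    simp [hprev]

theorem predError_eq_zero_of_lt {t l : ℕ} (ht : t < l) (hl : l < L) :
    predError n θ f (X t) l = 0 := by
  rw [predError_congr (state_eq_init_of_lt hclamp hdyn hinit t l ht hl.le)
    (state_eq_init_of_lt hclamp hdyn hinit t (l + 1) (by omega) hl), hinit l (by omega) hl]

theorem predError_succ_self {m i : ℕ} (hm : m + 1 < L) :
    predError n θ f (X (m + 1)) (m + 1) i = γ * (deriv f (mu n θ f (X 0) (m + 1) i) *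
      ∑ k ∈ range (n m), predError n θ f (X m) m k * θ (m + 1) k i) := by
  have hstate : X m (m + 1) i = mu n θ f (X 0) (m + 1) i := by
    rw [state_eq_init_of_lt hclamp hdyn hinit m (m + 1) (by omega) hm.le]
    exact sub_eq_zero.mp (congrFun (hinit (m + 1) (by omega) hm) i)
  have hpred : mu n θ f (X (m + 1)) (m + 1) i = mu n θ f (X 0) (m + 1) i := by
    rw [mu_congr (state_eq_init_of_lt hclamp hdyn hinit (m + 1) (m + 2) (by omega) hm)]
  have hown : predError n θ f (X m) (m + 1) i = 0 :=
    congrFun (predError_eq_zero_of_lt hclamp hdyn hinit (by omega) hm) i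
  rw [predError, hdyn m (m + 1) (by omega) hm, hpred, hown, hstate, Nat.add_sub_cancel]
  ring

end Dynamics

theorem zil_error_recursion_general
    (L : ℕ) (n : ℕ → ℕ) (θ : ℕ → ℕ → ℕ → ℝ) (f : ℝ → ℝ)
    (sIn : ℕ → ℝ) (γ : ℝ) (hγ : γ = 1) (X : ℕ → ℕ → ℕ → ℝ)
    (hclampIn : ∀ t i, X t L i = sIn i)
    (hdyn : ∀ t, ∀ l, 0 < l → l < L → ∀ i,
      X (t + 1) l i = X t l i + γ *
        (-(X t l i - mu n θ f (X t) l i) +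
          deriv f (X t l i) *
            ∑ k ∈ Finset.range (n (l - 1)),
              (X t (l - 1) k - mu n θ f (X t) (l - 1) k) * θ l k i))
    (hinit : ∀ l, 1 ≤ l → l ≤ L - 1 → ∀ i, X 0 l i = mu n θ f (X 0) l i) :
    ∀ l, 1 ≤ l → l ≤ L - 1 → ∀ i,
      X l l i - mu n θ f (X l) l i
        = deriv f (mu n θ f (X 0) l i) *
            ∑ k ∈ Finset.range (n (l - 1)),
              (X (l - 1) (l - 1) k - mu n θ f (X (l - 1)) (l - 1) k) * θ l k i := by
  subst hγ
  have hclamp : ∀ t, X t L = X 0 L := fun t => funext fun i =>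
    (hclampIn t i).trans (hclampIn 0 i).symm
  have hinit' : ∀ l, 0 < l → l < L → predError n θ f (X 0) l = 0 := fun l hl hL =>
    funext fun i => sub_eq_zero.mpr (hinit l hl (by omega) i)
  rintro (_ | m) hm hmL i
  · omega
  have h := predError_succ_self (m := m) (i := i) hclamp hdyn hinit' (by omega)
  rw [one_mul] at h
  simpa only [Nat.add_sub_cancel, predError] using h

/-- in Z-IL inference with `γ = 1` and `ε^l_{i,0} = 0` for `l > 0`,
the prediction error at layer `l`, inference time `t = l` satisfies
`ε^l_{i,l} = f'(μ^l_{i,0}) · ∑_k ε^{l-1}_{k,l-1} θ^l_{k,i}` for `1 ≤ l ≤ l_max − 1`. -/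
theorem zil_error_recursion
    (L : ℕ) (n : ℕ → ℕ) (θ : ℕ → ℕ → ℕ → ℝ) (f : ℝ → ℝ) (hf : Differentiable ℝ f)
    (sIn sOut : ℕ → ℝ) (γ : ℝ) (hγ : γ = 1) (X : ℕ → ℕ → ℕ → ℝ)
    (hclampIn : ∀ t i, X t L i = sIn i)
    (hclampOut : ∀ t i, X t 0 i = sOut i)
    (hdyn : ∀ t, ∀ l, 0 < l → l < L → ∀ i,
      X (t + 1) l i = X t l i + γ *
        (-(X t l i - mu n θ f (X t) l i) +
          deriv f (X t l i) *
            ∑ k ∈ Finset.range (n (l - 1)),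
              (X t (l - 1) k - mu n θ f (X t) (l - 1) k) * θ l k i))
    (hinit : ∀ l, 1 ≤ l → l ≤ L - 1 → ∀ i, X 0 l i = mu n θ f (X 0) l i) :
    ∀ l, 1 ≤ l → l ≤ L - 1 → ∀ i,
      X l l i - mu n θ f (X l) l i
        = deriv f (mu n θ f (X 0) l i) *
            ∑ k ∈ Finset.range (n (l - 1)),
              (X (l - 1) (l - 1) k - mu n θ f (X (l - 1)) (l - 1) k) * θ l k i :=
  zil_error_recursion_general L n θ f sIn γ hγ X hclampIn hdyn hinit
end

section
/- In Z-IL with γ = 1 and zero initial hidden errors, the output-layer error is constant for all inference times t ≤ l_max − 1 at which weight updates occur before the hidden value nodes below have changed; in particular ε^0_{i,t} = ε^0_{i,0} = s^out_i − μ^0_{i,0} for all t < 1, and more generally layer-0's error used in the update of θ^1 at time t = 0 equals s^out_i − y^0_i, the BP output error δ^0_i. -/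
section Feedforward

variable {n : ℕ → ℕ} {θ : ℕ → ℕ → ℕ → ℝ} {f : ℝ → ℝ}

theorem mu_congr_of_eq_succ {x x' : ℕ → ℕ → ℝ} {l : ℕ} (h : x (l + 1) = x' (l + 1)) :
    mu n θ f x l = mu n θ f x' l := by
  funext i
  simp only [mu, h]

theorem eq_of_feedforward {L : ℕ} {x y : ℕ → ℕ → ℝ} (htop : x L = y L)
    (hx : ∀ l, 0 < l → l < L → x l = mu n θ f x l)
    (hy : ∀ l, 0 < l → l < L → y l = mu n θ f y l) :
    ∀ l, 0 < l → l ≤ L → x l = y l := by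
  intro l hl hlL
  induction hlL using Nat.decreasingInduction with
  | self => exact htop
  | of_succ k hkL ih =>
    rw [hx k hl hkL, hy k hl hkL]
    exact mu_congr_of_eq_succ (ih k.succ_pos)

end Feedforward

theorem zil_output_error_general
    (L : ℕ) (hL : 0 < L) (n : ℕ → ℕ) (θ : ℕ → ℕ → ℕ → ℝ) (f : ℝ → ℝ)
    (sIn sOut : ℕ → ℝ) (X : ℕ → ℕ → ℕ → ℝ)
    (hclampIn : ∀ t i, X t L i = sIn i)
    (hclampOut : ∀ t i, X t 0 i = sOut i)
    (hinit : ∀ l, 1 ≤ l → l ≤ L - 1 → ∀ i, X 0 l i = mu n θ f (X 0) l i)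
    (y : ℕ → ℕ → ℝ)
    (hyL : ∀ i, y L i = sIn i)
    (hyRec : ∀ l < L, ∀ i,
      y l i = ∑ j ∈ Finset.range (n (l + 1)), θ (l + 1) i j * f (y (l + 1) j)) :
    (∀ t < 1, ∀ i, X t 0 i - mu n θ f (X t) 0 i = X 0 0 i - mu n θ f (X 0) 0 i) ∧
    (∀ i, X 0 0 i - mu n θ f (X 0) 0 i = sOut i - mu n θ f (X 0) 0 i) ∧
    (∀ i, X 0 0 i - mu n θ f (X 0) 0 i = sOut i - y 0 i) := by
  have hy : ∀ l < L, y l = mu n θ f y l := fun l hl => funext (hyRec l hl)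
  have hagree : ∀ l, 0 < l → l ≤ L → X 0 l = y l :=
    eq_of_feedforward (funext fun i => (hclampIn 0 i).trans (hyL i).symm)
      (fun l hl hlL => funext (hinit l hl (Nat.le_sub_one_of_lt hlL)))
      (fun l _ hlL => hy l hlL)
  have hmu0 : mu n θ f (X 0) 0 = y 0 :=
    (mu_congr_of_eq_succ (hagree 1 one_pos hL)).trans (hy 0 hL).symm
  refine ⟨fun t ht i => by rw [Nat.lt_one_iff.mp ht], fun i => by rw [hclampOut], fun i => ?_⟩
  rw [hclampOut, hmu0]

/-- in Z-IL with `γ = 1` and zero initial hidden errors (output clamped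
to `s^out`), the output-layer error is constant before the hidden value nodes below
have changed: `ε^0_{i,t} = ε^0_{i,0} = s^out_i − μ^0_{i,0}` for all `t < 1`; and the
layer-0 error used in the update of `θ^1` at time `t = 0` equals the BP output error:
`ε^0_{i,0} = s^out_i − y^0_i = δ^0_i`, where `y` is the feedforward pass of the
corresponding ANN with identical weights. -/
theorem zil_output_error
    (L : ℕ) (hL : 0 < L) (n : ℕ → ℕ) (θ : ℕ → ℕ → ℕ → ℝ) (f : ℝ → ℝ)
    (hf : Differentiable ℝ f)
    (sIn sOut : ℕ → ℝ) (γ : ℝ) (hγ : γ = 1) (X : ℕ → ℕ → ℕ → ℝ)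
    (hclampIn : ∀ t i, X t L i = sIn i)
    (hclampOut : ∀ t i, X t 0 i = sOut i)
    (hdyn : ∀ t, ∀ l, 0 < l → l < L → ∀ i,
      X (t + 1) l i = X t l i + γ *
        (-(X t l i - mu n θ f (X t) l i) +
          deriv f (X t l i) *
            ∑ k ∈ Finset.range (n (l - 1)),
              (X t (l - 1) k - mu n θ f (X t) (l - 1) k) * θ l k i))
    (hinit : ∀ l, 1 ≤ l → l ≤ L - 1 → ∀ i, X 0 l i = mu n θ f (X 0) l i)
    (y : ℕ → ℕ → ℝ)
    (hyL : ∀ i, y L i = sIn i)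
    (hyRec : ∀ l < L, ∀ i,
      y l i = ∑ j ∈ Finset.range (n (l + 1)), θ (l + 1) i j * f (y (l + 1) j)) :
    (∀ t < 1, ∀ i, X t 0 i - mu n θ f (X t) 0 i = X 0 0 i - mu n θ f (X 0) 0 i) ∧
    (∀ i, X 0 0 i - mu n θ f (X 0) 0 i = sOut i - mu n θ f (X 0) 0 i) ∧
    (∀ i, X 0 0 i - mu n θ f (X 0) 0 i = sOut i - y 0 i) :=
  zil_output_error_general L hL n θ f sIn sOut X hclampIn hclampOut hinit y hyL hyRec
end
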